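/- Let d ≥ 1, m = 2d, and r, t ∈ ℂ satisfy the unitarity constraints |r|² + (m−1)|t|² = 1 and (m−2)|t|² + conj(r)·t + r·conj(t) = 0. Define the dispersion 𝒟(n) = K·Σ_{a∈(Fin m)^n} ‖e(a_1)+⋯+e(a_n)‖²·|Ξ(a)|² and R(n) = Σ_{a∈(Fin m)^n} |Ξ(a)|² · ⟨e(a_1)+⋯+e(a_n), e(a_n)⟩. Then for every n ≥ 1, 𝒟(n+1) = 𝒟(n) + 1 + 2K·(|r|² − |t|²)·R(n), where K = |(r−t)/√m + √m·t|². -/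

import Mathlib

noncomputable section

open scoped BigOperators ComplexConjugate RealInnerProductSpace

/-- `Ξ(a_1, …, a_n) = ∏_{j=1}^{n-1} (t + (r - t) δ_{a_j, a_{j+1}})` (empty product is 1). -/
def Xi (m n : ℕ) (r t : ℂ) (a : Fin n → Fin m) : ℂ :=
  ∏ j : Fin n, if h : (j : ℕ) + 1 < n then
    (t + (r - t) * (if a j = a ⟨(j : ℕ) + 1, h⟩ then 1 else 0)) else 1

/-- The `2d` signed standard basis vectors of `ℝ^d`: `e(2k) = u_k`, `e(2k+1) = -u_k`. -/
def eR (d : ℕ) (a : Fin (2 * d)) : EuclideanSpace ℝ (Fin d) :=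
  EuclideanSpace.single ⟨(a : ℕ) / 2, by have := a.2; omega⟩
    (if (a : ℕ) % 2 = 0 then 1 else -1)

/-- The normalization constant `K = |(r-t)/√m + √m t|²` with `m = 2d`. -/
def K (d : ℕ) (r t : ℂ) : ℝ :=
  ‖(r - t) / (Real.sqrt (2 * d) : ℂ) + (Real.sqrt (2 * d) : ℂ) * t‖ ^ 2

/-- The dispersion `𝒟(n) = K Σ_a ‖e(a_1)+⋯+e(a_n)‖² |Ξ(a)|²` of the phase-averaged
quantum walk with random phase shifts. -/
def Dsp (d : ℕ) (r t : ℂ) (n : ℕ) : ℝ :=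
  K d r t * ∑ a : Fin n → Fin (2 * d),
    ‖∑ j : Fin n, eR d (a j)‖ ^ 2 * ‖Xi (2 * d) n r t a‖ ^ 2

/-- The auxiliary sum `R(n) = Σ_a |Ξ(a)|² ⟨e(a_1)+⋯+e(a_n), e(a_n)⟩`. -/
def Rsum (d : ℕ) (r t : ℂ) (n : ℕ) : ℝ :=
  if hn : 0 < n then
    ∑ a : Fin n → Fin (2 * d), ‖Xi (2 * d) n r t a‖ ^ 2 *
      ⟪(∑ j : Fin n, eR d (a j)), eR d (a ⟨n - 1, by omega⟩)⟫
  else 0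

/-!
Condition on the last step of the walk: appending a letter `c` to a word `b` multiplies `|Ξ|²`
by `|r|²` or `|t|²` according to whether `c` repeats the last letter of `b`, and these weights sum
to `|r|² + (m - 1)|t|² = 1` over `c`. Since the vectors `e(c)` are unit vectors summing to zero,
averaging `‖S + e(c)‖² = ‖S‖² + 2⟨S, e(c)⟩ + 1` against the weights leaves
`‖S‖² + 1 + 2(|r|² - |t|²)⟨S, e(b_last)⟩`. Summing over `b` uses `Σ_b |Ξ(b)|² = m`, and the
prefactor is `K m = 1`: `√m ((r - t)/√m + √m t) = r + (m - 1)t` has modulus one.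
-/

theorem Fintype.sum_fin_succ_pi_eq_sum_snoc {α M : Type*} [Fintype α] [AddCommMonoid M] {n : ℕ}
    (F : (Fin (n + 1) → α) → M) :
    ∑ a, F a = ∑ b : Fin n → α, ∑ c, F (Fin.snoc b c) := by
  rw [← (Fin.snocEquiv fun _ => α).sum_comp, Fintype.sum_prod_type, Finset.sum_comm]
  rfl

section ite

variable {ι : Type*} [Fintype ι] [DecidableEq ι]

theorem Fintype.sum_ite_eq_smul {R M : Type*} [Ring R] [AddCommGroup M] [Module R M]
    (x : ι) (A B : R) (v : ι → M) :
    ∑ c, (if x = c then A else B) • v c = B • ∑ c, v c + (A - B) • v x := by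
  have hsplit (c : ι) :
      (if x = c then A else B) • v c = B • v c + if x = c then (A - B) • v c else 0 := by
    split_ifs <;> simp [sub_smul]
  simp only [hsplit, Finset.sum_add_distrib, Finset.smul_sum, Finset.sum_ite_eq, Finset.mem_univ,
    if_true]

theorem Fintype.sum_ite_eq_const {R : Type*} [CommRing R] (x : ι) (A B : R) :
    ∑ c, (if x = c then A else B) = A + (Fintype.card ι - 1) * B := by
  have h := Fintype.sum_ite_eq_smul x A B (fun _ => (1 : R))
  simp only [smul_eq_mul, mul_one, Finset.sum_const, Finset.card_univ, nsmul_eq_mul] at h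
  rw [h]
  ring

theorem sum_ite_mul_norm_add_sq {E : Type*} [NormedAddCommGroup E] [InnerProductSpace ℝ E]
    {v : ι → E} (hv : ∀ i, ‖v i‖ = 1) (hsum : ∑ i, v i = 0)
    {A B : ℝ} (hAB : A + (Fintype.card ι - 1) * B = 1) (x : ι) (S : E) :
    ∑ c, (if x = c then A else B) * ‖S + v c‖ ^ 2 = ‖S‖ ^ 2 + 1 + 2 * (A - B) * ⟪S, v x⟫ := by
  have hexpand (c : ι) : (if x = c then A else B) * ‖S + v c‖ ^ 2
      = (if x = c then A else B) * (‖S‖ ^ 2 + 1) + 2 * ⟪S, (if x = c then A else B) • v c⟫ := by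
    rw [norm_add_sq_real, hv, real_inner_smul_right]
    ring
  rw [Finset.sum_congr rfl fun c _ => hexpand c, Finset.sum_add_distrib, ← Finset.sum_mul,
    ← Finset.mul_sum, ← inner_sum, Fintype.sum_ite_eq_const, hAB, Fintype.sum_ite_eq_smul, hsum,
    smul_zero, zero_add, real_inner_smul_right]
  ring

end ite

theorem Xi_succ (m n : ℕ) (r t : ℂ) (a : Fin (n + 1) → Fin m) :
    Xi m (n + 1) r t a = ∏ j : Fin n, if a j.castSucc = a j.succ then r else t := by
  rw [Xi, Fin.prod_univ_castSucc, dif_neg (by simp), mul_one]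
  refine Finset.prod_congr rfl fun j _ => ?_
  rw [dif_pos (by simp)]
  change t + (r - t) * (if a j.castSucc = a j.succ then 1 else 0) = _
  split_ifs <;> ring

theorem Xi_one (m : ℕ) (r t : ℂ) (a : Fin 1 → Fin m) : Xi m 1 r t a = 1 := by
  simp [Xi_succ]

theorem norm_Xi_snoc_sq (m n : ℕ) (r t : ℂ) (b : Fin (n + 1) → Fin m) (c : Fin m) :
    ‖Xi m (n + 2) r t (Fin.snoc b c)‖ ^ 2
      = ‖Xi m (n + 1) r t b‖ ^ 2 * if b (Fin.last n) = c then ‖r‖ ^ 2 else ‖t‖ ^ 2 := by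
  rw [Xi_succ, Xi_succ, Fin.prod_univ_castSucc]
  simp only [← Fin.castSucc_succ, Fin.snoc_castSucc, Fin.succ_last, Fin.snoc_last]
  rw [norm_mul, mul_pow]
  split_ifs <;> rfl

theorem sum_norm_Xi_sq {m : ℕ} {r t : ℂ} (h1 : ‖r‖ ^ 2 + ((m : ℝ) - 1) * ‖t‖ ^ 2 = 1) (n : ℕ) :
    ∑ a : Fin (n + 1) → Fin m, ‖Xi m (n + 1) r t a‖ ^ 2 = m := by
  induction n with
  | zero => simp [Xi_one]
  | succ n ih =>
    rw [Fintype.sum_fin_succ_pi_eq_sum_snoc, ← ih]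
    refine Finset.sum_congr rfl fun b _ => ?_
    simp only [norm_Xi_snoc_sq, ← Finset.mul_sum]
    rw [Fintype.sum_ite_eq_const, Fintype.card_fin, h1, mul_one]

theorem sum_norm_sum_sq_mul_norm_Xi_sq_succ {m : ℕ} {E : Type*} [NormedAddCommGroup E]
    [InnerProductSpace ℝ E] {v : Fin m → E} (hv : ∀ i, ‖v i‖ = 1) (hsum : ∑ i, v i = 0)
    {r t : ℂ} (h1 : ‖r‖ ^ 2 + ((m : ℝ) - 1) * ‖t‖ ^ 2 = 1) (n : ℕ) :
    ∑ a : Fin (n + 2) → Fin m, ‖∑ j, v (a j)‖ ^ 2 * ‖Xi m (n + 2) r t a‖ ^ 2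
      = ∑ b : Fin (n + 1) → Fin m, ‖∑ j, v (b j)‖ ^ 2 * ‖Xi m (n + 1) r t b‖ ^ 2 + m
        + 2 * (‖r‖ ^ 2 - ‖t‖ ^ 2) * ∑ b : Fin (n + 1) → Fin m,
            ‖Xi m (n + 1) r t b‖ ^ 2 * ⟪∑ j, v (b j), v (b (Fin.last n))⟫ := by
  have hstep (b : Fin (n + 1) → Fin m) :
      ∑ c, ‖∑ j, v (Fin.snoc b c j)‖ ^ 2 * ‖Xi m (n + 2) r t (Fin.snoc b c)‖ ^ 2
        = ‖∑ j, v (b j)‖ ^ 2 * ‖Xi m (n + 1) r t b‖ ^ 2 + ‖Xi m (n + 1) r t b‖ ^ 2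
          + 2 * (‖r‖ ^ 2 - ‖t‖ ^ 2)
            * (‖Xi m (n + 1) r t b‖ ^ 2 * ⟪∑ j, v (b j), v (b (Fin.last n))⟫) := by
    have hw := sum_ite_mul_norm_add_sq hv hsum (by simpa using h1) (b (Fin.last n))
      (∑ j, v (b j))
    simp only [Fin.sum_univ_castSucc (n := n + 1), Fin.snoc_castSucc, Fin.snoc_last,
      norm_Xi_snoc_sq]
    calc _ = ‖Xi m (n + 1) r t b‖ ^ 2 * ∑ c, (if b (Fin.last n) = c then ‖r‖ ^ 2 else ‖t‖ ^ 2)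
            * ‖∑ j, v (b j) + v c‖ ^ 2 := by
          rw [Finset.mul_sum]
          exact Finset.sum_congr rfl fun c _ => by ring
      _ = _ := by
          rw [hw]
          ring
  rw [Fintype.sum_fin_succ_pi_eq_sum_snoc, Finset.sum_congr rfl fun b _ => hstep b,
    Finset.sum_add_distrib, Finset.sum_add_distrib, ← Finset.mul_sum, sum_norm_Xi_sq h1]

-- `r + (m - 1)t` is the eigenvalue of the coin `(r - t)I + tJ` on the uniform vector.
theorem norm_add_mul_sq_eq_one {m : ℕ} {r t : ℂ}
    (h1 : ‖r‖ ^ 2 + ((m : ℝ) - 1) * ‖t‖ ^ 2 = 1)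
    (h2 : ((m : ℂ) - 2) * ((‖t‖ ^ 2 : ℝ) : ℂ) + conj r * t + r * conj t = 0) :
    ‖r + ((m : ℂ) - 1) * t‖ ^ 2 = 1 := by
  have h1C : ((‖r‖ ^ 2 + ((m : ℝ) - 1) * ‖t‖ ^ 2 : ℝ) : ℂ) = 1 := by exact_mod_cast h1
  have hz := Complex.mul_conj' (r + ((m : ℂ) - 1) * t)
  simp only [map_add, map_mul, map_sub, map_natCast, map_one] at hz
  push_cast at h1C h2
  exact_mod_cast (by linear_combination -hz + Complex.mul_conj' r
    + ((m : ℂ) - 1) ^ 2 * Complex.mul_conj' t + ((m : ℂ) - 1) * h2 + h1C :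
      ((‖r + ((m : ℂ) - 1) * t‖ : ℂ)) ^ 2 = 1)

theorem K_mul_eq_one {d : ℕ} (hd : 0 < d) {r t : ℂ}
    (h1 : ‖r‖ ^ 2 + (((2 * d : ℕ) : ℝ) - 1) * ‖t‖ ^ 2 = 1)
    (h2 : (((2 * d : ℕ) : ℂ) - 2) * ((‖t‖ ^ 2 : ℝ) : ℂ) + conj r * t + r * conj t = 0) :
    K d r t * ((2 * d : ℕ) : ℝ) = 1 := by
  have hm : (0 : ℝ) < 2 * d := by positivity
  have hs : ((Real.sqrt (2 * d) : ℝ) : ℂ) ^ 2 = ((2 * d : ℕ) : ℂ) := by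
    rw [← Complex.ofReal_pow, Real.sq_sqrt hm.le]
    push_cast
    ring
  have hs0 : ((Real.sqrt (2 * d) : ℝ) : ℂ) ≠ 0 := by exact_mod_cast (Real.sqrt_pos.2 hm).ne'
  have hvec : (r - t) / (Real.sqrt (2 * d) : ℂ) + (Real.sqrt (2 * d) : ℂ) * t
      = (r + (((2 * d : ℕ) : ℂ) - 1) * t) / (Real.sqrt (2 * d) : ℂ) := by
    field_simp
    linear_combination t * hs
  rw [K, hvec, norm_div, div_pow, norm_add_mul_sq_eq_one h1 h2, Complex.norm_real,
    Real.norm_of_nonneg (Real.sqrt_nonneg _), Real.sq_sqrt hm.le]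
  push_cast
  field_simp

theorem norm_eR (d : ℕ) (a : Fin (2 * d)) : ‖eR d a‖ = 1 := by
  rw [eR, PiLp.norm_single]
  split_ifs <;> simp

theorem sum_eR (d : ℕ) : ∑ a, eR d a = 0 := by
  rw [← (finProdFinEquiv.trans (finCongr (mul_comm d 2))).sum_comp, Fintype.sum_prod_type]
  refine Finset.sum_eq_zero fun k _ => ?_
  have hidx (i : Fin 2) : (i + 2 * (k : ℕ)) / 2 = k := by omega
  ext j
  simp only [eR, Equiv.trans_apply, finCongr_apply, Fin.val_cast, finProdFinEquiv_apply_val, hidx,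
    Nat.add_mul_mod_self_left, Fin.sum_univ_two, Fin.isValue, Fin.val_zero, Fin.val_one,
    Nat.zero_mod, Nat.one_mod, if_pos, one_ne_zero, if_false, PiLp.add_apply, PiLp.single_apply,
    PiLp.zero_apply]
  split_ifs <;> simp

theorem Rsum_succ (d : ℕ) (r t : ℂ) (n : ℕ) :
    Rsum d r t (n + 1) = ∑ a : Fin (n + 1) → Fin (2 * d),
      ‖Xi (2 * d) (n + 1) r t a‖ ^ 2 * ⟪∑ j, eR d (a j), eR d (a (Fin.last n))⟫ :=
  dif_pos n.succ_pos

theorem dispersion_recursion_general (d : ℕ) (hd : 1 ≤ d) (r t : ℂ)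
    (h1 : ‖r‖ ^ 2 + (((2 * d : ℕ) : ℝ) - 1) * ‖t‖ ^ 2 = 1)
    (h2 : (((2 * d : ℕ) : ℂ) - 2) * ((‖t‖ ^ 2 : ℝ) : ℂ) + conj r * t + r * conj t = 0)
    (n : ℕ) :
    Dsp d r t (n + 1)
      = Dsp d r t n + 1 + 2 * K d r t * (‖r‖ ^ 2 - ‖t‖ ^ 2) * Rsum d r t n := by
  have hK := K_mul_eq_one hd h1 h2
  rcases n with _ | n
  · simpa [Dsp, Rsum, Xi_one, norm_eR] using hK
  · rw [Dsp, Dsp, sum_norm_sum_sq_mul_norm_Xi_sq_succ (norm_eR d) (sum_eR d) h1, Rsum_succ]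
    linear_combination hK

/-- Eq. (57) of the paper: the recursion
`𝒟(n+1) = 𝒟(n) + 1 + 2K(|r|² - |t|²) R(n)` for the dispersion of the quantum walk with
random phase shifts with a unitary generalized Grover coin. -/
theorem dispersion_recursion (d : ℕ) (hd : 1 ≤ d) (r t : ℂ)
    (h1 : ‖r‖ ^ 2 + (((2 * d : ℕ) : ℝ) - 1) * ‖t‖ ^ 2 = 1)
    (h2 : (((2 * d : ℕ) : ℂ) - 2) * ((‖t‖ ^ 2 : ℝ) : ℂ) + conj r * t + r * conj t = 0)
    (n : ℕ) (hn : 1 ≤ n) :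
    Dsp d r t (n + 1)
      = Dsp d r t n + 1 + 2 * K d r t * (‖r‖ ^ 2 - ‖t‖ ^ 2) * Rsum d r t n :=
  dispersion_recursion_general d hd r t h1 h2 n
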